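/- arXiv:math/0304252 — 2 statements merged into one kernel-verified Lean document; each statement's English description precedes it below -/
import Mathlib

section
/- Let E be a finite set, d ≥ 1, and let φ and ψ both be generic symmetric, or both be generic antisymmetric, functions on the injective (d+1)-tuples of E that are flip-related with flip set F = {x₀,…,x_d}. Then ∼_φ and ∼_ψ coincide on pairs of elements both lying in F and on pairs both lying in E∖F, while for a ∈ F and b ∈ E∖F one has a ∼_φ b if and only if a ≁_ψ b. -/
open Finset

/-- A function on `d`-tuples is symmetric if it is invariant under all
permutations of the index set. -/
def IsSymmetricFn {E : Type*} {d : ℕ} (φ : (Fin d → E) → ℝ) : Prop :=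
  ∀ (x : Fin d → E) (σ : Equiv.Perm (Fin d)), φ (x ∘ σ) = φ x

/-- A function on `d`-tuples is antisymmetric if permuting the entries by `σ`
multiplies the value by `sign σ`. -/
def IsAntisymmetricFn {E : Type*} {d : ℕ} (φ : (Fin d → E) → ℝ) : Prop :=
  ∀ (x : Fin d → E) (σ : Equiv.Perm (Fin d)),
    φ (x ∘ σ) = ((Equiv.Perm.sign σ : ℤ) : ℝ) * φ x

/-- A function on `d`-tuples is generic if it does not vanish on any injective tuple. -/
def IsGenericFn {E : Type*} {d : ℕ} (φ : (Fin d → E) → ℝ) : Prop :=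
  ∀ x : Fin d → E, Function.Injective x → φ x ≠ 0

/-- A `d`-element subset `s` (not containing `a`, `b`) separates `a` from `b`
with respect to `φ` if `φ(x₁,…,x_d,a) * φ(x₁,…,x_d,b) < 0` for some (equivalently,
for symmetric or antisymmetric `φ`, any) enumeration `x` of `s`. -/
def Separates {E : Type*} [DecidableEq E] {d : ℕ} (φ : (Fin (d + 1) → E) → ℝ)
    (s : Finset E) (a b : E) : Prop :=
  ∃ x : Fin d → E, Function.Injective x ∧ Finset.image x Finset.univ = s ∧
    φ (Fin.snoc x a) * φ (Fin.snoc x b) < 0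

/-- `sepCount φ a b` is the number `n_φ(a,b)` of `d`-subsets of `E \ {a,b}`
separating `a` from `b`. -/
noncomputable def sepCount {E : Type*} [DecidableEq E] {d : ℕ}
    (φ : (Fin (d + 1) → E) → ℝ) (a b : E) : ℕ :=
  Set.ncard {s : Finset E | s.card = d ∧ a ∉ s ∧ b ∉ s ∧ Separates φ s a b}

/-- The Orchard relation of a generic symmetric function. -/
def OrchardSym {E : Type*} [DecidableEq E] {d : ℕ}
    (φ : (Fin (d + 1) → E) → ℝ) (x y : E) : Prop :=
  x = y ∨ sepCount φ x y % 2 = 0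

/-- The Orchard relation of a generic antisymmetric function. -/
def OrchardAnti {E : Type*} [Fintype E] [DecidableEq E] {d : ℕ}
    (φ : (Fin (d + 1) → E) → ℝ) (x y : E) : Prop :=
  x = y ∨ sepCount φ x y % 2 = Nat.choose (Fintype.card E - 3) (d - 1) % 2

/-- Two generic functions are flip-related with flip set `F` if their product is
negative on tuples enumerating `F` and positive on all other injective tuples. -/
def FlipRelated {E : Type*} [DecidableEq E] {d : ℕ}
    (φ ψ : (Fin (d + 1) → E) → ℝ) (F : Finset E) : Prop :=
  ∀ x : Fin (d + 1) → E, Function.Injective x →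
    (Finset.image x Finset.univ = F → φ x * ψ x < 0) ∧
    (Finset.image x Finset.univ ≠ F → 0 < φ x * ψ x)

/-- `Rmap φ (x₁,…,x_d) = ∏_{x ∈ E∖{x₁,…,x_d}} φ(x,x₁,…,x_d)`. -/
noncomputable def Rmap {E : Type*} [Fintype E] [DecidableEq E] {d : ℕ}
    (φ : (Fin (d + 1) → E) → ℝ) : (Fin d → E) → ℝ :=
  fun x => ∏ y ∈ Finset.univ \ Finset.image x Finset.univ, φ (Fin.cons y x)

/-- `Amap φ (x₀,…,x_{d+1}) = ∏_{i=0}^{d+1} φ(x₀,…,x_{i-1},x_{i+1},…,x_{d+1})`. -/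
noncomputable def Amap {E : Type*} {d : ℕ}
    (φ : (Fin (d + 1) → E) → ℝ) : (Fin (d + 2) → E) → ℝ :=
  fun x => ∏ i : Fin (d + 2), φ (x ∘ Fin.succAbove i)

/-- `muCount φ x` is the number of `d`-subsets `{x₁,…,x_d} ⊆ E∖{x}` with
`φ(x,x₁,…,x_d) > 0`. -/
noncomputable def muCount {E : Type*} [DecidableEq E] {d : ℕ}
    (φ : (Fin (d + 1) → E) → ℝ) (x : E) : ℕ :=
  Set.ncard {s : Finset E | s.card = d ∧ x ∉ s ∧
    ∃ t : Fin d → E, Function.Injective t ∧ Finset.image t Finset.univ = s ∧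
      0 < φ (Fin.cons x t)}

section Helpers

variable {E : Type*} [DecidableEq E] {d : ℕ}

lemma image_snoc_univ (x : Fin d → E) (c : E) :
    Finset.image (Fin.snoc x c : Fin (d + 1) → E) Finset.univ
      = insert c (Finset.image x Finset.univ) := by
  ext y
  simp only [Finset.mem_image, Finset.mem_insert, Finset.mem_univ, true_and]
  constructor
  · rintro ⟨i, hi⟩
    induction i using Fin.lastCases with
    | last => simp only [Fin.snoc_last] at hi; exact Or.inl hi.symm
    | cast j => simp only [Fin.snoc_castSucc] at hi; exact Or.inr ⟨j, hi⟩
  · rintro (rfl | ⟨j, hj⟩)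
    · exact ⟨Fin.last d, Fin.snoc_last _ _⟩
    · exact ⟨j.castSucc, by simpa [Fin.snoc_castSucc] using hj⟩

lemma snoc_injective {x : Fin d → E} (hx : Function.Injective x) {c : E}
    (hc : c ∉ Finset.image x Finset.univ) :
    Function.Injective (Fin.snoc x c : Fin (d + 1) → E) := by
  intro i j h
  induction i using Fin.lastCases with
  | last =>
    induction j using Fin.lastCases with
    | last => rfl
    | cast j =>
      exfalso; apply hc
      simp only [Fin.snoc_last, Fin.snoc_castSucc] at h
      exact Finset.mem_image.2 ⟨j, Finset.mem_univ _, h.symm⟩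
  | cast i =>
    induction j using Fin.lastCases with
    | last =>
      exfalso; apply hc
      simp only [Fin.snoc_last, Fin.snoc_castSucc] at h
      exact Finset.mem_image.2 ⟨i, Finset.mem_univ _, h⟩
    | cast j =>
      simp only [Fin.snoc_castSucc] at h
      exact congrArg Fin.castSucc (hx h)

lemma exists_enum {s : Finset E} (hs : s.card = d) :
    ∃ x : Fin d → E, Function.Injective x ∧ Finset.image x Finset.univ = s := by
  have e : Fin d ≃ {y // y ∈ s} := (s.equivFinOfCardEq hs).symm
  refine ⟨fun i => (e i : E), ?_, ?_⟩
  · intro i j h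
    exact e.injective (Subtype.ext h)
  · ext y
    simp only [Finset.mem_image, Finset.mem_univ, true_and]
    constructor
    · rintro ⟨i, rfl⟩; exact (e i).2
    · intro hy; exact ⟨e.symm ⟨y, hy⟩, by simp⟩

lemma exists_perm {x x' : Fin d → E} (hx : Function.Injective x)
    (hx' : Function.Injective x')
    (him : Finset.image x Finset.univ = Finset.image x' Finset.univ) :
    ∃ σ : Equiv.Perm (Fin d), x' = x ∘ σ := by
  have hmem : ∀ i, ∃ j ∈ (Finset.univ : Finset (Fin d)), x j = x' i := by
    intro i
    have : x' i ∈ Finset.image x Finset.univ := by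
      rw [him]
      exact Finset.mem_image.2 ⟨i, Finset.mem_univ _, rfl⟩
    exact Finset.mem_image.1 this
  choose g hg1 hg2 using hmem
  have hginj : Function.Injective g := by
    intro i j h
    apply hx'
    rw [← hg2 i, ← hg2 j, h]
  have hgbij : Function.Bijective g := Finite.injective_iff_bijective.mp hginj
  exact ⟨Equiv.ofBijective g hgbij, funext fun i => (hg2 i).symm⟩

/-- The permutation of `Fin (d+1)` extending `σ` and fixing the last element. -/
def extPerm (σ : Equiv.Perm (Fin d)) : Equiv.Perm (Fin (d + 1)) where
  toFun := Fin.lastCases (Fin.last d) (fun j => (σ j).castSucc)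
  invFun := Fin.lastCases (Fin.last d) (fun j => (σ.symm j).castSucc)
  left_inv i := by
    induction i using Fin.lastCases with
    | last => simp
    | cast j => simp
  right_inv i := by
    induction i using Fin.lastCases with
    | last => simp
    | cast j => simp

lemma snoc_comp_extPerm (x : Fin d → E) (σ : Equiv.Perm (Fin d)) (c : E) :
    (Fin.snoc (x ∘ σ) c : Fin (d + 1) → E) = (Fin.snoc x c : Fin (d + 1) → E) ∘ extPerm σ := by
  funext i
  induction i using Fin.lastCases with
  | last =>
    simp [extPerm]
  | cast j =>
    simp [extPerm]

lemma prod_snoc_perm (φ : (Fin (d + 1) → E) → ℝ)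
    (hφ : IsSymmetricFn φ ∨ IsAntisymmetricFn φ)
    (x : Fin d → E) (σ : Equiv.Perm (Fin d)) (a b : E) :
    φ (Fin.snoc (x ∘ σ) a) * φ (Fin.snoc (x ∘ σ) b)
      = φ (Fin.snoc x a) * φ (Fin.snoc x b) := by
  rw [snoc_comp_extPerm, snoc_comp_extPerm]
  rcases hφ with hφ | hφ
  · rw [hφ, hφ]
  · rw [hφ, hφ]
    rcases Int.units_eq_one_or (Equiv.Perm.sign (extPerm σ)) with h | h <;>
      rw [h] <;> push_cast <;> ring

lemma sep_iff_of_enum (φ : (Fin (d + 1) → E) → ℝ)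
    (hφ : IsSymmetricFn φ ∨ IsAntisymmetricFn φ)
    {s : Finset E} {a b : E} {x : Fin d → E} (hx : Function.Injective x)
    (hxim : Finset.image x Finset.univ = s) :
    Separates φ s a b ↔ φ (Fin.snoc x a) * φ (Fin.snoc x b) < 0 := by
  constructor
  · rintro ⟨x', hx', hx'im, hlt⟩
    obtain ⟨σ, rfl⟩ := exists_perm hx hx' (hxim.trans hx'im.symm)
    rwa [prod_snoc_perm φ hφ x σ a b] at hlt
  · intro hlt
    exact ⟨x, hx, hxim, hlt⟩

end Helpers

section Main

variable {E : Type*} [Fintype E] [DecidableEq E] {d : ℕ}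

/-- If neither `insert a s` nor `insert b s` is the flip set, separation transfers. -/
lemma sep_transfer {φ ψ : (Fin (d + 1) → E) → ℝ} {F : Finset E}
    (hflip : FlipRelated φ ψ F) {s : Finset E} {a b : E}
    (ha : a ∉ s) (hb : b ∉ s)
    (hia : insert a s ≠ F) (hib : insert b s ≠ F) :
    Separates φ s a b → Separates ψ s a b := by
  rintro ⟨x, hx, hxim, hlt⟩
  refine ⟨x, hx, hxim, ?_⟩
  have hanotin : a ∉ Finset.image x Finset.univ := hxim ▸ ha
  have hbnotin : b ∉ Finset.image x Finset.univ := hxim ▸ hb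
  have hinja := snoc_injective hx hanotin
  have hinjb := snoc_injective hx hbnotin
  have hima : Finset.image (Fin.snoc x a : Fin (d+1) → E) Finset.univ ≠ F := by
    rw [image_snoc_univ, hxim]; exact hia
  have himb : Finset.image (Fin.snoc x b : Fin (d+1) → E) Finset.univ ≠ F := by
    rw [image_snoc_univ, hxim]; exact hib
  have hA : 0 < φ (Fin.snoc x a) * ψ (Fin.snoc x a) := (hflip _ hinja).2 hima
  have hB : 0 < φ (Fin.snoc x b) * ψ (Fin.snoc x b) := (hflip _ hinjb).2 himb
  nlinarith

lemma flipRelated_symm {φ ψ : (Fin (d + 1) → E) → ℝ} {F : Finset E}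
    (hflip : FlipRelated φ ψ F) : FlipRelated ψ φ F := by
  intro x hx
  refine ⟨fun h => ?_, fun h => ?_⟩
  · have := (hflip x hx).1 h; nlinarith
  · have := (hflip x hx).2 h; nlinarith

lemma sepCount_eq_of_ne {φ ψ : (Fin (d + 1) → E) → ℝ} {F : Finset E}
    (hflip : FlipRelated φ ψ F) {a b : E}
    (h : ∀ s : Finset E, s.card = d → a ∉ s → b ∉ s → insert a s ≠ F ∧ insert b s ≠ F) :
    sepCount φ a b = sepCount ψ a b := by
  unfold sepCount
  congr 1
  ext s
  simp only [Set.mem_setOf_eq]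
  constructor
  · rintro ⟨hc, ha, hb, hsep⟩
    exact ⟨hc, ha, hb, sep_transfer hflip ha hb (h s hc ha hb).1 (h s hc ha hb).2 hsep⟩
  · rintro ⟨hc, ha, hb, hsep⟩
    exact ⟨hc, ha, hb,
      sep_transfer (flipRelated_symm hflip) ha hb (h s hc ha hb).1 (h s hc ha hb).2 hsep⟩

/-- In the mixed case the separation status of `s₀ = F.erase a` flips. -/
lemma sep_flip_special {φ ψ : (Fin (d + 1) → E) → ℝ} {F : Finset E}
    (hgenφ : IsGenericFn φ) (hgenψ : IsGenericFn ψ)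
    (hflip : FlipRelated φ ψ F)
    (hφ : IsSymmetricFn φ ∨ IsAntisymmetricFn φ)
    (hψ : IsSymmetricFn ψ ∨ IsAntisymmetricFn ψ)
    {a b : E} (ha : a ∈ F) (hb : b ∉ F) (hFc : F.card = d + 1) :
    (Separates φ (F.erase a) a b ↔ ¬ Separates ψ (F.erase a) a b) := by
  have hcard : (F.erase a).card = d := by
    rw [Finset.card_erase_of_mem ha, hFc]; omega
  obtain ⟨x, hx, hxim⟩ := exists_enum hcard
  have hanotin : a ∉ Finset.image x Finset.univ := by
    rw [hxim]; exact Finset.notMem_erase a F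
  have hbnotin : b ∉ Finset.image x Finset.univ := by
    rw [hxim]; exact fun hmem => hb (Finset.mem_of_mem_erase hmem)
  have hinja := snoc_injective hx hanotin
  have hinjb := snoc_injective hx hbnotin
  have hima : Finset.image (Fin.snoc x a : Fin (d+1) → E) Finset.univ = F := by
    rw [image_snoc_univ, hxim, Finset.insert_erase ha]
  have himb : Finset.image (Fin.snoc x b : Fin (d+1) → E) Finset.univ ≠ F := by
    rw [image_snoc_univ, hxim]
    intro hcontra
    exact hb (hcontra ▸ Finset.mem_insert_self b _)
  have hA : φ (Fin.snoc x a) * ψ (Fin.snoc x a) < 0 := (hflip _ hinja).1 hima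
  have hB : 0 < φ (Fin.snoc x b) * ψ (Fin.snoc x b) := (hflip _ hinjb).2 himb
  have hQne : ψ (Fin.snoc x a) * ψ (Fin.snoc x b) ≠ 0 :=
    mul_ne_zero (hgenψ _ hinja) (hgenψ _ hinjb)
  rw [sep_iff_of_enum φ hφ hx hxim, sep_iff_of_enum ψ hψ hx hxim]
  constructor
  · intro hP hQ; nlinarith
  · intro hQ
    rcases hQne.lt_or_gt with hQ' | hQ'
    · exact absurd hQ' hQ
    · nlinarith

lemma sepCount_offset {φ ψ : (Fin (d + 1) → E) → ℝ} {F : Finset E}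
    (hgenφ : IsGenericFn φ) (hgenψ : IsGenericFn ψ)
    (hflip : FlipRelated φ ψ F)
    (hφ : IsSymmetricFn φ ∨ IsAntisymmetricFn φ)
    (hψ : IsSymmetricFn ψ ∨ IsAntisymmetricFn ψ)
    {a b : E} (ha : a ∈ F) (hb : b ∉ F) (hFc : F.card = d + 1) :
    sepCount φ a b = sepCount ψ a b + 1 ∨ sepCount ψ a b = sepCount φ a b + 1 := by
  set s₀ : Finset E := F.erase a with hs₀
  have hs₀card : s₀.card = d := by rw [hs₀, Finset.card_erase_of_mem ha, hFc]; omega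
  have has₀ : a ∉ s₀ := Finset.notMem_erase a F
  have hbs₀ : b ∉ s₀ := fun hmem => hb (Finset.mem_of_mem_erase hmem)
  have hspecial := sep_flip_special hgenφ hgenψ hflip hφ hψ ha hb hFc
  set Sφ : Set (Finset E) :=
    {s : Finset E | s.card = d ∧ a ∉ s ∧ b ∉ s ∧ Separates φ s a b} with hSφ
  set Sψ : Set (Finset E) :=
    {s : Finset E | s.card = d ∧ a ∉ s ∧ b ∉ s ∧ Separates ψ s a b} with hSψ
  have hkey : ∀ s : Finset E, s ≠ s₀ → s.card = d → a ∉ s → b ∉ s →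
      (Separates φ s a b ↔ Separates ψ s a b) := by
    intro s hne hc hans hbns
    have hia : insert a s ≠ F := by
      intro hcontra
      apply hne
      rw [hs₀, ← hcontra, Finset.erase_insert hans]
    have hib : insert b s ≠ F := fun hcontra => hb (hcontra ▸ Finset.mem_insert_self b s)
    exact ⟨sep_transfer hflip hans hbns hia hib,
      sep_transfer (flipRelated_symm hflip) hans hbns hia hib⟩
  by_cases hP : Separates φ s₀ a b
  · left
    have hnotQ : ¬ Separates ψ s₀ a b := hspecial.1 hP
    have hs₀notin : s₀ ∉ Sψ := fun hmem => hnotQ hmem.2.2.2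
    have hsets : Sφ = insert s₀ Sψ := by
      ext s
      simp only [hSφ, hSψ, Set.mem_setOf_eq, Set.mem_insert_iff]
      constructor
      · rintro ⟨hc, hans, hbns, hsep⟩
        by_cases hne : s = s₀
        · exact Or.inl hne
        · exact Or.inr ⟨hc, hans, hbns, (hkey s hne hc hans hbns).1 hsep⟩
      · rintro (rfl | ⟨hc, hans, hbns, hsep⟩)
        · exact ⟨hs₀card, has₀, hbs₀, hP⟩
        · by_cases hne : s = s₀
          · exact absurd (hne ▸ hsep) hnotQ
          · exact ⟨hc, hans, hbns, (hkey s hne hc hans hbns).2 hsep⟩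
    calc sepCount φ a b = Sφ.ncard := rfl
      _ = Sψ.ncard + 1 := by rw [hsets, Set.ncard_insert_of_notMem hs₀notin (Set.toFinite _)]
      _ = sepCount ψ a b + 1 := rfl
  · right
    have hQ : Separates ψ s₀ a b := by
      by_contra hnotQ
      exact hP (hspecial.2 hnotQ)
    have hs₀notin : s₀ ∉ Sφ := fun hmem => hP hmem.2.2.2
    have hsets : Sψ = insert s₀ Sφ := by
      ext s
      simp only [hSφ, hSψ, Set.mem_setOf_eq, Set.mem_insert_iff]
      constructor
      · rintro ⟨hc, hans, hbns, hsep⟩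
        by_cases hne : s = s₀
        · exact Or.inl hne
        · exact Or.inr ⟨hc, hans, hbns, (hkey s hne hc hans hbns).2 hsep⟩
      · rintro (rfl | ⟨hc, hans, hbns, hsep⟩)
        · exact ⟨hs₀card, has₀, hbs₀, hQ⟩
        · by_cases hne : s = s₀
          · exact absurd (hne ▸ hsep) hP
          · exact ⟨hc, hans, hbns, (hkey s hne hc hans hbns).1 hsep⟩
    calc sepCount ψ a b = Sψ.ncard := rfl
      _ = Sφ.ncard + 1 := by rw [hsets, Set.ncard_insert_of_notMem hs₀notin (Set.toFinite _)]
      _ = sepCount φ a b + 1 := rfl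

end Main

theorem stmt_7 {E : Type*} [Fintype E] [DecidableEq E] (d : ℕ) (hd : 1 ≤ d)
    (hcard : d + 1 ≤ Fintype.card E)
    (φ ψ : (Fin (d + 1) → E) → ℝ)
    (hgenφ : IsGenericFn φ) (hgenψ : IsGenericFn ψ)
    (F : Finset E) (hF : F.card = d + 1)
    (hflip : FlipRelated φ ψ F) :
    (IsSymmetricFn φ ∧ IsSymmetricFn ψ →
      (∀ a b : E, a ∈ F → b ∈ F → (OrchardSym φ a b ↔ OrchardSym ψ a b)) ∧
      (∀ a b : E, a ∉ F → b ∉ F → (OrchardSym φ a b ↔ OrchardSym ψ a b)) ∧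
      (∀ a b : E, a ∈ F → b ∉ F → (OrchardSym φ a b ↔ ¬ OrchardSym ψ a b))) ∧
    (IsAntisymmetricFn φ ∧ IsAntisymmetricFn ψ →
      (∀ a b : E, a ∈ F → b ∈ F → (OrchardAnti φ a b ↔ OrchardAnti ψ a b)) ∧
      (∀ a b : E, a ∉ F → b ∉ F → (OrchardAnti φ a b ↔ OrchardAnti ψ a b)) ∧
      (∀ a b : E, a ∈ F → b ∉ F → (OrchardAnti φ a b ↔ ¬ OrchardAnti ψ a b))) := by
  have heqIn : ∀ a b : E, a ≠ b → a ∈ F → b ∈ F → sepCount φ a b = sepCount ψ a b := by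
    intro a b hab ha hb
    apply sepCount_eq_of_ne hflip
    intro s hc has hbs
    constructor
    · intro hcontra
      have : b ∈ insert a s := hcontra ▸ hb
      rcases Finset.mem_insert.1 this with h | h
      · exact hab h.symm
      · exact hbs h
    · intro hcontra
      have : a ∈ insert b s := hcontra ▸ ha
      rcases Finset.mem_insert.1 this with h | h
      · exact hab h
      · exact has h
  have heqOut : ∀ a b : E, a ∉ F → b ∉ F → sepCount φ a b = sepCount ψ a b := by
    intro a b ha hb
    apply sepCount_eq_of_ne hflip
    intro s _ _ _
    exact ⟨fun h => ha (h ▸ Finset.mem_insert_self a s),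
      fun h => hb (h ▸ Finset.mem_insert_self b s)⟩
  constructor
  · rintro ⟨hφs, hψs⟩
    refine ⟨?_, ?_, ?_⟩
    · intro a b ha hb
      by_cases hab : a = b
      · subst hab; simp [OrchardSym]
      · unfold OrchardSym; rw [heqIn a b hab ha hb]
    · intro a b ha hb
      unfold OrchardSym; rw [heqOut a b ha hb]
    · intro a b ha hb
      have hab : ¬ a = b := fun h => hb (h ▸ ha)
      have hoff := sepCount_offset hgenφ hgenψ hflip (Or.inl hφs) (Or.inl hψs) ha hb hF
      simp only [OrchardSym, hab, false_or]
      omega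
  · rintro ⟨hφa, hψa⟩
    refine ⟨?_, ?_, ?_⟩
    · intro a b ha hb
      by_cases hab : a = b
      · subst hab; simp [OrchardAnti]
      · unfold OrchardAnti; rw [heqIn a b hab ha hb]
    · intro a b ha hb
      unfold OrchardAnti; rw [heqOut a b ha hb]
    · intro a b ha hb
      have hab : ¬ a = b := fun h => hb (h ▸ ha)
      have hoff := sepCount_offset hgenφ hgenψ hflip (Or.inr hφa) (Or.inr hψa) ha hb hF
      simp only [OrchardAnti, hab, false_or]
      omega
end

section
/- Let E be a finite set, d ≥ 1 with |E| ≥ d+2 and |E| ≢ d (mod 2), and let φ be a generic symmetric or a generic antisymmetric function on the injective (d+1)-tuples of E. Then the Orchard relations ∼_φ and ∼_{Aφ} coincide on E. -/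
open Finset

/-!
Let `S` be a `(d+1)`-set avoiding `a ≠ b`, enumerated by `x`. Expanding `Aφ`,
`Aφ(x,a) · Aφ(x,b) = φ(x)² · ∏_{T} φ(T,a) φ(T,b)` over the `d`-subsets `T ⊂ S`, so `S` separates
`a` from `b` for `Aφ` exactly when an odd number of its `d`-subsets separate them for `φ`; this
only needs `φ` to be symmetric up to a sign depending on the permutation alone. Counting the pairs
`T ⊂ S` gives `n_{Aφ}(a,b) ≡ (|E| - d - 2) · n_φ(a,b) (mod 2)`, and `|E| - d - 2` is odd. In the
antisymmetric case the binomial offsets match modulo 2 by Lucas' theorem: `C(|E|-3, d-1)` is even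
when `d` is even, and congruent to `C(|E|-3, d)` when `d` is odd.
-/

def IsSymmetricUpToSign {E : Type*} {k : ℕ} (φ : (Fin k → E) → ℝ) : Prop :=
  ∀ σ : Equiv.Perm (Fin k), ∃ ε : ℝ, ε * ε = 1 ∧ ∀ x, φ (x ∘ σ) = ε * φ x

lemma IsSymmetricFn.isSymmetricUpToSign {E : Type*} {k : ℕ} {φ : (Fin k → E) → ℝ}
    (hφ : IsSymmetricFn φ) : IsSymmetricUpToSign φ :=
  fun σ ↦ ⟨1, one_mul 1, fun x ↦ by rw [hφ x σ, one_mul]⟩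

lemma IsAntisymmetricFn.isSymmetricUpToSign {E : Type*} {k : ℕ} {φ : (Fin k → E) → ℝ}
    (hφ : IsAntisymmetricFn φ) : IsSymmetricUpToSign φ := by
  refine fun σ ↦ ⟨((Equiv.Perm.sign σ : ℤ) : ℝ), ?_, fun x ↦ hφ x σ⟩
  rcases Int.units_eq_one_or (Equiv.Perm.sign σ) with h | h <;> simp [h]

lemma Fin.exists_perm_snoc_comp {E : Type*} {n : ℕ} (τ : Equiv.Perm (Fin n)) :
    ∃ σ : Equiv.Perm (Fin (n + 1)), ∀ (x : Fin n → E) (a : E),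
      (Fin.snoc x a : Fin (n + 1) → E) ∘ σ = Fin.snoc (x ∘ τ) a := by
  refine ⟨finSuccEquivLast.symm.permCongr (Equiv.optionCongr τ), fun x a ↦ funext fun i ↦ ?_⟩
  induction i using Fin.lastCases <;>
    simp [finSuccEquivLast_castSucc, finSuccEquivLast_symm_some]

lemma Function.Injective.exists_perm_comp_eq {E : Type*} {n : ℕ} {x y : Fin n → E}
    (hx : Function.Injective x) (hy : Function.Injective y) (h : Set.range x = Set.range y) :
    ∃ τ : Equiv.Perm (Fin n), x ∘ τ = y := by
  refine ⟨(Equiv.ofInjective y hy).trans ((Equiv.setCongr h.symm).trans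
    (Equiv.ofInjective x hx).symm), funext fun j ↦ ?_⟩
  simp only [Function.comp_apply, Equiv.trans_apply, Equiv.setCongr, Equiv.subtypeEquivProp]
  exact Equiv.apply_ofInjective_symm hx _

lemma mul_neg_iff_of_pos_left {R : Type*} [Semiring R] [LinearOrder R] [IsStrictOrderedRing R]
    {a b : R} (ha : 0 < a) : a * b < 0 ↔ b < 0 := by
  simpa using mul_lt_mul_iff_of_pos_left (c := 0) ha

lemma Finset.prod_neg_iff_odd_card_filter {ι R : Type*} [CommRing R] [LinearOrder R]
    [IsStrictOrderedRing R] (s : Finset ι) (f : ι → R) (hf : ∀ i ∈ s, f i ≠ 0) :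
    ∏ i ∈ s, f i < 0 ↔ Odd #{i ∈ s | f i < 0} := by
  set k := #{i ∈ s | f i < 0}
  have hpos : 0 < (∏ i ∈ s with f i < 0, -f i) * ∏ i ∈ s with ¬ f i < 0, f i := by
    refine mul_pos (prod_pos fun i hi ↦ ?_) (prod_pos fun i hi ↦ ?_) <;>
      simp only [mem_filter, not_lt] at hi
    · exact neg_pos.2 hi.2
    · exact hi.2.lt_of_ne' (hf i hi.1)
  have hsplit : ∏ i ∈ s, f i =
      (-1) ^ k * ((∏ i ∈ s with f i < 0, -f i) * ∏ i ∈ s with ¬ f i < 0, f i) := by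
    rw [prod_neg, ← mul_assoc, ← mul_assoc, ← pow_add, ← two_mul, pow_mul, neg_one_sq, one_pow,
      one_mul, prod_filter_mul_prod_filter_not]
  rw [hsplit]
  rcases Nat.even_or_odd k with h | h
  · simpa [h.neg_one_pow, Nat.not_odd_iff_even.2 h] using hpos.le
  · simpa [h.neg_one_pow, h] using hpos

lemma Finset.powersetCard_eq_image_erase {E : Type*} [DecidableEq E] {S : Finset E} {n : ℕ}
    (hS : #S = n + 1) : S.powersetCard n = S.image S.erase := by
  ext T
  simp only [mem_powersetCard, mem_image, ← covBy_iff_exists_erase, covBy_iff_card_sdiff_eq_one]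
  refine and_congr_right fun hTS ↦ ?_
  rw [card_sdiff_of_subset hTS]
  omega

lemma Finset.card_filter_erase_eq_card_filter_powersetCard {E : Type*} [DecidableEq E] {n : ℕ}
    {x : Fin (n + 1) → E} (hx : Function.Injective x) (p : Finset E → Prop) [DecidablePred p] :
    #{j | p ((image x univ).erase (x j))} = #{T ∈ (image x univ).powersetCard n | p T} := by
  have hS : #(image x univ) = n + 1 := by
    rw [card_image_of_injective _ hx, card_univ, Fintype.card_fin]
  rw [powersetCard_eq_image_erase hS, filter_image,
    card_image_of_injOn ((erase_injOn _).mono (filter_subset _ _)), filter_image,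
    card_image_of_injective _ hx]

lemma Finset.sum_card_filter_powersetCard_succ {E : Type*} [DecidableEq E] (U : Finset E) (n : ℕ)
    (p : Finset E → Prop) [DecidablePred p] :
    ∑ S ∈ U.powersetCard (n + 1), #{T ∈ S.powersetCard n | p T} =
      #{T ∈ U.powersetCard n | p T} * (#U - n) := by
  have habove : ∀ S ∈ U.powersetCard (n + 1), {T ∈ S.powersetCard n | p T} =
      {T ∈ U.powersetCard n | p T}.bipartiteAbove (fun S T ↦ T ⊆ S) S := by
    intro S hS
    ext T
    simp only [mem_bipartiteAbove, mem_filter, mem_powersetCard] at hS ⊢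
    exact ⟨fun h ↦ ⟨⟨⟨h.1.1.trans hS.1, h.1.2⟩, h.2⟩, h.1.1⟩,
      fun h ↦ ⟨⟨h.2, h.1.1.2⟩, h.1.2⟩⟩
  have hbelow : ∀ T ∈ {T ∈ U.powersetCard n | p T},
      #((U.powersetCard (n + 1)).bipartiteBelow (fun S T ↦ T ⊆ S) T) = #U - n := by
    intro T hT
    simp only [mem_filter, mem_powersetCard] at hT
    rw [bipartiteBelow, card_filter_powersetCard_subset T U (n + 1) hT.1.1 (by omega), hT.1.2,
      Nat.add_sub_cancel_left, Nat.choose_one_right]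
  rw [sum_congr rfl fun S hS ↦ congrArg card (habove S hS),
    sum_card_bipartiteAbove_eq_sum_card_bipartiteBelow, sum_congr rfl hbelow, sum_const,
    smul_eq_mul]

lemma Finset.exists_injective_image_eq {E : Type*} [DecidableEq E] {s : Finset E} {n : ℕ}
    (hs : #s = n) : ∃ x : Fin n → E, Function.Injective x ∧ image x univ = s := by
  let e : Fin n ≃ s := (s.equivFin.trans (finCongr hs)).symm
  refine ⟨Subtype.val ∘ e, Subtype.val_injective.comp e.injective, ?_⟩
  rw [← image_image, image_univ_equiv, ← attach_eq_univ, attach_image_val]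

lemma Fin.snoc_comp_succAbove_castSucc {E : Type*} {n : ℕ} (x : Fin (n + 1) → E) (a : E)
    (j : Fin (n + 1)) :
    (Fin.snoc x a : Fin (n + 2) → E) ∘ j.castSucc.succAbove = Fin.snoc (x ∘ j.succAbove) a := by
  funext k
  induction k using Fin.lastCases with
  | last =>
    simp only [Function.comp_apply, Fin.snoc_last]
    rw [Fin.succAbove_castSucc_of_le _ _ (Fin.le_last j), Fin.succ_last, Fin.snoc_last]
  | cast k =>
    simp only [Function.comp_apply, Fin.snoc_castSucc]
    rw [Fin.castSucc_succAbove_castSucc, Fin.snoc_castSucc]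

lemma Finset.image_comp_succAbove {E : Type*} [DecidableEq E] {n : ℕ} {x : Fin (n + 1) → E}
    (hx : Function.Injective x) (j : Fin (n + 1)) :
    image (x ∘ j.succAbove) univ = (image x univ).erase (x j) := by
  ext e
  simp only [mem_image, mem_univ, true_and, mem_erase, Function.comp_apply]
  constructor
  · rintro ⟨k, rfl⟩
    exact ⟨fun h ↦ Fin.succAbove_ne j k (hx h), j.succAbove k, rfl⟩
  · rintro ⟨hne, i, rfl⟩
    obtain ⟨k, hk⟩ := Fin.exists_succAbove_eq fun h : i = j ↦ hne (congrArg x h)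
    exact ⟨k, by rw [hk]⟩

section Orchard

variable {E : Type*} {d : ℕ} {φ : (Fin (d + 1) → E) → ℝ}

lemma Amap_snoc (φ : (Fin (d + 1) → E) → ℝ) (x : Fin (d + 1) → E) (a : E) :
    Amap φ (Fin.snoc x a) = φ x * ∏ j : Fin (d + 1), φ (Fin.snoc (x ∘ j.succAbove) a) := by
  rw [Amap, Fin.prod_univ_castSucc, mul_comm]
  congr 1
  · congr 1
    funext k
    simp [Fin.succAbove_last]
  · exact prod_congr rfl fun j _ ↦ by rw [Fin.snoc_comp_succAbove_castSucc]

lemma Amap_snoc_mul_Amap_snoc (φ : (Fin (d + 1) → E) → ℝ) (x : Fin (d + 1) → E) (a b : E) :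
    Amap φ (Fin.snoc x a) * Amap φ (Fin.snoc x b) = φ x * φ x *
      ∏ j : Fin (d + 1), φ (Fin.snoc (x ∘ j.succAbove) a) * φ (Fin.snoc (x ∘ j.succAbove) b) := by
  rw [Amap_snoc, Amap_snoc, prod_mul_distrib]
  ring

lemma IsSymmetricUpToSign.mul_snoc_comp_perm (hφ : IsSymmetricUpToSign φ) (x : Fin d → E)
    (τ : Equiv.Perm (Fin d)) (a b : E) :
    φ (Fin.snoc (x ∘ τ) a) * φ (Fin.snoc (x ∘ τ) b) = φ (Fin.snoc x a) * φ (Fin.snoc x b) := by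
  obtain ⟨σ, hσ⟩ := Fin.exists_perm_snoc_comp (E := E) τ
  obtain ⟨ε, hε, hφσ⟩ := hφ σ
  rw [← hσ, ← hσ, hφσ, hφσ]
  linear_combination φ (Fin.snoc x a) * φ (Fin.snoc x b) * hε

variable [DecidableEq E]

open scoped Classical

lemma IsSymmetricUpToSign.separates_iff (hφ : IsSymmetricUpToSign φ) {x : Fin d → E}
    (hx : Function.Injective x) (a b : E) :
    Separates φ (image x univ) a b ↔ φ (Fin.snoc x a) * φ (Fin.snoc x b) < 0 := by
  refine ⟨fun ⟨y, hy, hyx, h⟩ ↦ ?_, fun h ↦ ⟨x, hx, rfl, h⟩⟩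
  have hrange : Set.range x = Set.range y := by
    simpa using congrArg (fun s : Finset E ↦ (s : Set E)) hyx.symm
  obtain ⟨τ, rfl⟩ := hx.exists_perm_comp_eq hy hrange
  rwa [hφ.mul_snoc_comp_perm] at h

lemma IsSymmetricUpToSign.Amap_snoc_mul_Amap_snoc_neg_iff (hφ : IsSymmetricUpToSign φ)
    (hgen : IsGenericFn φ) {x : Fin (d + 1) → E} (hx : Function.Injective x) {a b : E}
    (ha : a ∉ image x univ) (hb : b ∉ image x univ) :
    Amap φ (Fin.snoc x a) * Amap φ (Fin.snoc x b) < 0 ↔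
      Odd #{T ∈ (image x univ).powersetCard d | Separates φ T a b} := by
  have hsub (j : Fin (d + 1)) : Function.Injective (x ∘ j.succAbove) :=
    hx.comp Fin.succAbove_right_injective
  have hsnoc (j : Fin (d + 1)) {c : E} (hc : c ∉ image x univ) :
      Function.Injective (Fin.snoc (x ∘ j.succAbove) c : Fin (d + 1) → E) :=
    Fin.snoc_injective_of_injective (hsub j) fun hcj ↦
      hc (by simpa using Set.range_comp_subset_range _ x hcj)
  rw [Amap_snoc_mul_Amap_snoc, mul_neg_iff_of_pos_left (mul_self_pos.2 (hgen x hx)),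
    prod_neg_iff_odd_card_filter _ _ fun j _ ↦
      mul_ne_zero (hgen _ (hsnoc j ha)) (hgen _ (hsnoc j hb)),
    ← card_filter_erase_eq_card_filter_powersetCard hx]
  simp_rw [← image_comp_succAbove hx, (hφ.separates_iff (hsub _) a b)]

lemma IsSymmetricUpToSign.separates_Amap_iff (hφ : IsSymmetricUpToSign φ) (hgen : IsGenericFn φ)
    {S : Finset E} (hS : #S = d + 1) {a b : E} (ha : a ∉ S) (hb : b ∉ S) :
    Separates (Amap φ) S a b ↔ Odd #{T ∈ S.powersetCard d | Separates φ T a b} := by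
  refine ⟨fun ⟨x, hx, hxS, h⟩ ↦ ?_, fun h ↦ ?_⟩
  · subst hxS
    exact (hφ.Amap_snoc_mul_Amap_snoc_neg_iff hgen hx ha hb).1 h
  · obtain ⟨x, hx, rfl⟩ := exists_injective_image_eq hS
    exact ⟨x, hx, rfl, (hφ.Amap_snoc_mul_Amap_snoc_neg_iff hgen hx ha hb).2 h⟩

variable [Fintype E]

lemma sepCount_eq_card_filter (φ : (Fin (d + 1) → E) → ℝ) (a b : E) :
    sepCount φ a b = #{T ∈ (univ \ {a, b}).powersetCard d | Separates φ T a b} := by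
  rw [sepCount, Set.ncard_eq_toFinset_card']
  congr 1
  ext T
  simp only [Set.mem_toFinset, Set.mem_ofPred_eq, mem_filter, mem_powersetCard, subset_sdiff,
    disjoint_insert_right, disjoint_singleton_right, subset_univ, true_and]
  tauto

lemma IsSymmetricUpToSign.odd_sepCount_Amap_iff (hφ : IsSymmetricUpToSign φ) (hgen : IsGenericFn φ)
    {a b : E} (hab : a ≠ b) :
    Odd (sepCount (Amap φ) a b) ↔ Odd (sepCount φ a b * (Fintype.card E - 2 - d)) := by
  set U : Finset E := univ \ {a, b}
  have hU : #U = Fintype.card E - 2 := by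
    rw [card_sdiff_of_subset (subset_univ _), card_univ, card_pair hab]
  have hAmap : sepCount (Amap φ) a b =
      #{S ∈ U.powersetCard (d + 1) | Odd #{T ∈ S.powersetCard d | Separates φ T a b}} := by
    rw [sepCount_eq_card_filter]
    refine congrArg card (filter_congr fun S hS ↦ ?_)
    simp only [mem_powersetCard, subset_sdiff, disjoint_insert_right, disjoint_singleton_right] at hS
    exact hφ.separates_Amap_iff hgen hS.2 hS.1.2.1 hS.1.2.2
  rw [hAmap, ← odd_sum_iff_odd_card_odd, sum_card_filter_powersetCard_succ, hU,
    sepCount_eq_card_filter, Nat.sub_sub]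

end Orchard

lemma Nat.choose_mod_two (n k : ℕ) :
    n.choose k % 2 = (n % 2).choose (k % 2) * (n / 2).choose (k / 2) % 2 :=
  Choose.choose_modEq_choose_mod_mul_choose_div_nat

lemma Nat.choose_mod_two_eq_zero_of_even_of_odd {n k : ℕ} (hn : Even n) (hk : Odd k) :
    n.choose k % 2 = 0 := by
  rw [choose_mod_two, Nat.even_iff.1 hn, Nat.odd_iff.1 hk]
  simp

lemma Nat.choose_pred_mod_two_of_odd_of_odd {n k : ℕ} (hn : Odd n) (hk : Odd k) :
    n.choose (k - 1) % 2 = n.choose k % 2 := by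
  obtain ⟨m, rfl⟩ := hk
  rw [choose_mod_two, choose_mod_two n, Nat.odd_iff.1 hn, Nat.add_sub_cancel,
    Nat.mul_add_mod, Nat.mul_add_div two_pos]
  simp

theorem stmt_17 {E : Type*} [Fintype E] [DecidableEq E] (d : ℕ) (hd : 1 ≤ d)
    (hcard : d + 2 ≤ Fintype.card E) (hpar : Fintype.card E % 2 ≠ d % 2)
    (φ : (Fin (d + 1) → E) → ℝ) (hgen : IsGenericFn φ) :
    (IsSymmetricFn φ →
      ∀ x y : E, OrchardSym φ x y ↔ OrchardSym (Amap φ) x y) ∧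
    (IsAntisymmetricFn φ →
      (Even d → ∀ x y : E, OrchardAnti φ x y ↔ OrchardSym (Amap φ) x y) ∧
      (Odd d → ∀ x y : E, OrchardAnti φ x y ↔ OrchardAnti (Amap φ) x y)) := by
  have hsep {x y : E} (hφ : IsSymmetricUpToSign φ) (hxy : x ≠ y) :
      sepCount (Amap φ) x y % 2 = sepCount φ x y % 2 := by
    have h := hφ.odd_sepCount_Amap_iff hgen hxy
    rw [Nat.odd_mul, and_iff_left (Nat.odd_iff.2 (by omega)), Nat.odd_iff, Nat.odd_iff] at h
    omega
  refine ⟨fun hsym x y ↦ ?_, fun hanti ↦ ⟨fun hde x y ↦ ?_, fun hdo x y ↦ ?_⟩⟩ <;>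
    by_cases hxy : x = y <;>
    simp only [OrchardSym, OrchardAnti, hxy, true_or, false_or]
  · rw [hsep hsym.isSymmetricUpToSign hxy]
  · rw [Nat.even_iff] at hde
    rw [hsep hanti.isSymmetricUpToSign hxy, Nat.choose_mod_two_eq_zero_of_even_of_odd
      (Nat.even_iff.2 (by omega)) (Nat.odd_iff.2 (by omega))]
  · have hd2 : d % 2 = 1 := Nat.odd_iff.1 hdo
    rw [hsep hanti.isSymmetricUpToSign hxy, Nat.add_sub_cancel,
      Nat.choose_pred_mod_two_of_odd_of_odd (Nat.odd_iff.2 (by omega)) hdo]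
end
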